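/- Let d ≥ 1, let G be a real d×d matrix, let a, b, J ≥ 0, and set σ = a·J·sym(G) + b·J·(trace G)·I with sym(G) = (G + Gᵀ)/2 and I the d×d identity. Let θ_old > 0, δt ≥ 0, c_v > 0, ρ0 > 0, and γ > 1 be reals, and suppose 1 + δt·(γ − 1)·trace(G) > 0. Then the backward-Euler temperature update θ_new = (θ_old + δt·trace(σᵀ·G)/(c_v·ρ0)) / (1 + δt·(γ − 1)·trace(G)) satisfies θ_new > 0. -/

import Mathlib

/-! The dissipation `tr(σᵀ G)` of the viscous stress is nonnegative: the bulk part contributes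
`b J (tr G)²`, and the shear part `a J tr(sym(G) G) = a J ‖sym G‖²_F`, because the antisymmetric
part of `G` is orthogonal to `sym G`. So the numerator of the update is at least `θ_old > 0`. -/

namespace Matrix

variable {n R : Type*} [Fintype n]

section OrderedRing

variable [CommRing R] [LinearOrder R] [IsStrictOrderedRing R]

theorem trace_transpose_mul_self_nonneg (A : Matrix n n R) : 0 ≤ (Aᵀ * A).trace := by
  simp only [trace, diag, mul_apply, transpose_apply]
  exact Finset.sum_nonneg fun _ _ => Finset.sum_nonneg fun _ _ => mul_self_nonneg _

theorem trace_add_transpose_mul_self_nonneg (G : Matrix n n R) :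
    0 ≤ ((G + Gᵀ) * G).trace := by
  have hsymm : (G + Gᵀ)ᵀ = G + Gᵀ := (isSymm_add_transpose_self G).eq
  have htranspose : ((G + Gᵀ) * Gᵀ).trace = ((G + Gᵀ) * G).trace := by
    rw [← trace_transpose_mul, hsymm, transpose_transpose]
  have htwice : ((G + Gᵀ)ᵀ * (G + Gᵀ)).trace = 2 * ((G + Gᵀ) * G).trace := by
    rw [hsymm, mul_add, trace_add, htranspose, two_mul]
  linarith [trace_transpose_mul_self_nonneg (G + Gᵀ)]

end OrderedRing

section OrderedField

variable [Field R] [LinearOrder R] [IsStrictOrderedRing R] [DecidableEq n]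

def viscousStress (μ κ : R) (G : Matrix n n R) : Matrix n n R :=
  μ • ((1 / 2 : R) • (G + Gᵀ)) + (κ * G.trace) • 1

theorem trace_viscousStress_transpose_mul (μ κ : R) (G : Matrix n n R) :
    ((viscousStress μ κ G)ᵀ * G).trace = μ / 2 * ((G + Gᵀ) * G).trace + κ * G.trace ^ 2 := by
  simp only [viscousStress, transpose_add, transpose_smul, transpose_one,
    (isSymm_add_transpose_self G).eq, add_mul, smul_mul, Matrix.one_mul, trace_add, trace_smul,
    smul_eq_mul]
  ring

theorem trace_viscousStress_transpose_mul_nonneg {μ κ : R} (hμ : 0 ≤ μ) (hκ : 0 ≤ κ)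
    (G : Matrix n n R) : 0 ≤ ((viscousStress μ κ G)ᵀ * G).trace := by
  rw [trace_viscousStress_transpose_mul]
  have := trace_add_transpose_mul_self_nonneg G
  positivity

end OrderedField

end Matrix

open Matrix in
theorem backward_euler_temperature_positivity_general
    (d : ℕ)
    (G : Matrix (Fin d) (Fin d) ℝ)
    (a b J : ℝ) (ha : 0 ≤ a) (hb : 0 ≤ b) (hJ : 0 ≤ J)
    (symG : Matrix (Fin d) (Fin d) ℝ)
    (hsym : symG = (1 / 2 : ℝ) • (G + G.transpose))
    (σ : Matrix (Fin d) (Fin d) ℝ)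
    (hσ : σ = (a * J) • symG + (b * J * G.trace) • (1 : Matrix (Fin d) (Fin d) ℝ))
    (θold δt cv ρ0 γ : ℝ)
    (hθold : 0 < θold) (hδt : 0 ≤ δt) (hcv : 0 < cv) (hρ0 : 0 < ρ0)
    (hden : 0 < 1 + δt * (γ - 1) * G.trace)
    (θnew : ℝ)
    (hθnew : θnew = (θold + δt * (σ.transpose * G).trace / (cv * ρ0))
        / (1 + δt * (γ - 1) * G.trace)) :
    0 < θnew := by
  have hσ' : σ = viscousStress (a * J) (b * J) G := by rw [hσ, hsym, viscousStress]
  have hdiss : 0 ≤ (σᵀ * G).trace := by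
    rw [hσ']
    exact trace_viscousStress_transpose_mul_nonneg (mul_nonneg ha hJ) (mul_nonneg hb hJ) G
  rw [hθnew]
  refine div_pos ?_ hden
  have hheating : 0 ≤ δt * (σᵀ * G).trace / (cv * ρ0) := by positivity
  linarith

/-- positivity of the backward-Euler temperature update
`θ_new = (θ_old + δt·tr(σᵀG)/(c_v ρ0)) / (1 + δt·(γ−1)·tr G)`. -/
theorem backward_euler_temperature_positivity
    (d : ℕ) (hd : 1 ≤ d)
    (G : Matrix (Fin d) (Fin d) ℝ)
    (a b J : ℝ) (ha : 0 ≤ a) (hb : 0 ≤ b) (hJ : 0 ≤ J)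
    (symG : Matrix (Fin d) (Fin d) ℝ)
    (hsym : symG = (1 / 2 : ℝ) • (G + G.transpose))
    (σ : Matrix (Fin d) (Fin d) ℝ)
    (hσ : σ = (a * J) • symG + (b * J * G.trace) • (1 : Matrix (Fin d) (Fin d) ℝ))
    (θold δt cv ρ0 γ : ℝ)
    (hθold : 0 < θold) (hδt : 0 ≤ δt) (hcv : 0 < cv) (hρ0 : 0 < ρ0) (hγ : 1 < γ)
    (hden : 0 < 1 + δt * (γ - 1) * G.trace)
    (θnew : ℝ)
    (hθnew : θnew = (θold + δt * (σ.transpose * G).trace / (cv * ρ0))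
        / (1 + δt * (γ - 1) * G.trace)) :
    0 < θnew :=
  backward_euler_temperature_positivity_general d G a b J ha hb hJ symG hsym σ hσ θold δt cv ρ0 γ
    hθold hδt hcv hρ0 hden θnew hθnew
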